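/- arXiv:2302.02260 — 2 statements merged into one kernel-verified Lean document; each statement's English description precedes it below -/
import Mathlib

section
/- The cyclic flats of a direct sum of q-matroids are exactly the direct sums of cyclic flats of the summands: Z(M₁⊕M₂) = {Z₁⊕Z₂ : Z₁∈Z(M₁), Z₂∈Z(M₂)}. -/
open Submodule Module

namespace QM

variable (F : Type*) {E : Type*} [Field F] [AddCommGroup E] [Module F E]

/-- The rank axioms (R1)-(R3) of a q-matroid. -/
def IsRkFn (ρ : Submodule F E → ℕ) : Prop :=
  (∀ V : Submodule F E, ρ V ≤ finrank F V) ∧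
  (∀ ⦃V W : Submodule F E⦄, V ≤ W → ρ V ≤ ρ W) ∧
  (∀ V W : Submodule F E, ρ (V ⊔ W) + ρ (V ⊓ W) ≤ ρ V + ρ W)

variable {F}

/-- Independent spaces. -/
def Indep (ρ : Submodule F E → ℕ) (V : Submodule F E) : Prop := ρ V = finrank F V

/-- Circuits: dependent spaces all of whose proper subspaces are independent. -/
def IsCircuit (ρ : Submodule F E → ℕ) (C : Submodule F E) : Prop :=
  ¬ Indep ρ C ∧ ∀ D : Submodule F E, D < C → Indep ρ D

/-- Open spaces: sums of circuits. -/
def IsOpenSp (ρ : Submodule F E → ℕ) (V : Submodule F E) : Prop :=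
  ∃ S : Set (Submodule F E), (∀ C ∈ S, IsCircuit ρ C) ∧ V = sSup S

/-- The cyclic core: the sum of all circuits contained in `V`. -/
def cyc (ρ : Submodule F E → ℕ) (V : Submodule F E) : Submodule F E :=
  sSup {C : Submodule F E | IsCircuit ρ C ∧ C ≤ V}

/-- The closure operator: the sum of all `⟨x⟩` with `ρ(V + ⟨x⟩) = ρ V`. -/
def cl (ρ : Submodule F E → ℕ) (V : Submodule F E) : Submodule F E :=
  sSup {W : Submodule F E | ∃ x : E, ρ (V ⊔ span F {x}) = ρ V ∧ W = span F {x}}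

/-- Flats. -/
def IsFlat (ρ : Submodule F E → ℕ) (V : Submodule F E) : Prop :=
  ∀ x : E, x ∉ V → ρ V < ρ (V ⊔ span F {x})

/-- Cyclic flats. -/
def CyclicFlat (ρ : Submodule F E → ℕ) (V : Submodule F E) : Prop :=
  IsFlat ρ V ∧ IsOpenSp ρ V

end QM

namespace QM

variable {F E₁ E₂ : Type*} [Field F] [AddCommGroup E₁] [Module F E₁]
  [AddCommGroup E₂] [Module F E₂]

/-- The rank function of the direct sum `M₁ ⊕ M₂` on `E₁ × E₂`:
`ρ(V) = dim V + min { ρ₁(π₁ X) + ρ₂(π₂ X) − dim X : X ≤ V }`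
(written in `ℕ` as `min { ρ₁(π₁ X) + ρ₂(π₂ X) + (dim V − dim X) : X ≤ V }`,
which agrees since `dim X ≤ dim V`). -/
noncomputable def dsRank (ρ₁ : Submodule F E₁ → ℕ) (ρ₂ : Submodule F E₂ → ℕ)
    (V : Submodule F (E₁ × E₂)) : ℕ :=
  sInf {n : ℕ | ∃ X : Submodule F (E₁ × E₂), X ≤ V ∧
    n = ρ₁ (X.map (LinearMap.fst F E₁ E₂)) + ρ₂ (X.map (LinearMap.snd F E₁ E₂)) +
      (finrank F V - finrank F X)}

end QM

/-!
An open space `Z` of `M₁ ⊕ M₂` is a sum of circuits. For a circuit `C` the minimum defining `ρ C`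
is attained at `X = C` (its proper subspaces are independent), and submodularity of
`φ X = ρ₁(π₁ X) + ρ₂(π₂ X)` propagates this to sums, so `ρ Z = φ Z = ρ(π₁ Z ⊕ π₂ Z)`; a flat
contained in a space of the same rank equals it, hence `Z = π₁ Z ⊕ π₂ Z`. Each `πᵢ Z` is open:
a hyperplane of `πᵢ C` pulls back to a hyperplane of `C`, which is independent, and this forces
the hyperplane to have the rank of `πᵢ C`; a space whose hyperplanes all keep its rank is open.
Flatness transfers in both directions through `ρ(V₁ ⊕ V₂) = ρ₁ V₁ + ρ₂ V₂`, and circuits of `Mᵢ`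
are circuits of `M₁ ⊕ M₂`.
-/

namespace QM

section LinearAlgebra

variable {F E E' : Type*} [Field F] [AddCommGroup E] [Module F E] [AddCommGroup E'] [Module F E']
  [FiniteDimensional F E]

lemma finrank_map_add_finrank_inf_ker (f : E →ₗ[F] E') (C : Submodule F E) :
    finrank F (C.map f) + finrank F ↥(C ⊓ LinearMap.ker f) = finrank F C := by
  rw [← LinearMap.range_domRestrict, ← map_comap_subtype, finrank_map_subtype_eq,
    ← LinearMap.ker_domRestrict]
  exact LinearMap.finrank_range_add_finrank_ker _

lemma finrank_inf_comap_add_finrank_map (f : E →ₗ[F] E') {C : Submodule F E}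
    {A : Submodule F E'} (hA : A ≤ C.map f) :
    finrank F ↥(C ⊓ A.comap f) + finrank F (C.map f) = finrank F C + finrank F A := by
  have hmap : (C ⊓ A.comap f).map f = A := by
    rw [← map_inf_eq_map_inf_comap, inf_eq_right.mpr hA]
  have hker : C ⊓ A.comap f ⊓ LinearMap.ker f = C ⊓ LinearMap.ker f := by
    rw [inf_assoc, inf_eq_right.mpr (LinearMap.ker_le_comap f)]
  have h₁ := finrank_map_add_finrank_inf_ker f (C ⊓ A.comap f)
  have h₂ := finrank_map_add_finrank_inf_ker f C
  rw [hmap, hker] at h₁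
  omega

lemma finrank_add_one_of_covBy {W V : Submodule F E} (h : W ⋖ V) :
    finrank F W + 1 = finrank F V := by
  obtain ⟨x, hxV, hxW⟩ := SetLike.exists_of_lt h.lt
  have hle : W ⊔ span F {x} ≤ V := sup_le h.le ((span_singleton_le_iff_mem x V).mpr hxV)
  rcases h.eq_or_eq le_sup_left hle with hW | hV
  · exact absurd (hW ▸ mem_sup_right (mem_span_singleton_self x)) hxW
  · rw [← hV, finrank_sup_span_singleton hxW]

end LinearAlgebra

section RankFunction

variable {F E : Type*} [Field F] [AddCommGroup E] [Module F E] {ρ : Submodule F E → ℕ}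

lemma IsRkFn.rk_bot (h : IsRkFn F ρ) : ρ ⊥ = 0 :=
  Nat.le_zero.mp (by simpa using h.1 ⊥)

lemma IsFlat.rk_inf_lt (h : IsRkFn F ρ) {V P : Submodule F E} (hV : IsFlat ρ V)
    (hP : ¬ P ≤ V) : ρ (P ⊓ V) < ρ P := by
  obtain ⟨x, hxP, hxV⟩ := SetLike.not_le_iff_exists.mp hP
  have hlt := hV x hxV
  have hle : ρ (V ⊔ span F {x}) ≤ ρ (P ⊔ V) :=
    h.2.1 (sup_le le_sup_right (le_sup_of_le_left ((span_singleton_le_iff_mem x P).mpr hxP)))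
  have hsub := h.2.2 P V
  omega

lemma IsFlat.eq_of_le_of_rk_le (mono : Monotone ρ) {V W : Submodule F E} (hV : IsFlat ρ V)
    (hVW : V ≤ W) (hρ : ρ W ≤ ρ V) : V = W := by
  refine le_antisymm hVW fun x hxW => by_contra fun hxV => ?_
  have hlt := hV x hxV
  have hle := mono (sup_le hVW ((span_singleton_le_iff_mem x W).mpr hxW))
  omega

lemma IsCircuit.isOpenSp {C : Submodule F E} (hC : IsCircuit ρ C) : IsOpenSp ρ C :=
  ⟨{C}, by simpa using hC, sSup_singleton.symm⟩

lemma isOpenSp_sSup {𝒪 : Set (Submodule F E)} (h𝒪 : ∀ O ∈ 𝒪, IsOpenSp ρ O) :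
    IsOpenSp ρ (sSup 𝒪) := by
  refine ⟨{C | IsCircuit ρ C ∧ C ≤ sSup 𝒪}, fun C hC => hC.1, ?_⟩
  refine le_antisymm (sSup_le fun O hO => ?_) (sSup_le fun C hC => hC.2)
  obtain ⟨S, hS, rfl⟩ := h𝒪 O hO
  exact sSup_le fun C hC => le_sSup ⟨hS C hC, (le_sSup hC).trans (le_sSup hO)⟩

lemma IsOpenSp.map_of_forall_isCircuit {E' : Type*} [AddCommGroup E'] [Module F E']
    {ρ' : Submodule F E' → ℕ} (f : E →ₗ[F] E')
    (hf : ∀ C, IsCircuit ρ C → IsOpenSp ρ' (C.map f)) {V : Submodule F E}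
    (hV : IsOpenSp ρ V) : IsOpenSp ρ' (V.map f) := by
  obtain ⟨S, hS, rfl⟩ := hV
  rw [(gc_map_comap f).l_sSup, ← sSup_image]
  exact isOpenSp_sSup (by rintro _ ⟨C, hC, rfl⟩; exact hf C (hS C hC))

section Injective

variable {E' : Type*} [AddCommGroup E'] [Module F E'] {ρ' : Submodule F E' → ℕ}
  {f : E →ₗ[F] E'}

lemma indep_map_iff (hf : Function.Injective f) (hρ : ∀ W, ρ' (W.map f) = ρ W)
    {W : Submodule F E} : Indep ρ' (W.map f) ↔ Indep ρ W := by
  rw [Indep, Indep, hρ, ← (equivMapOfInjective f hf W).finrank_eq]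

lemma IsCircuit.map (hf : Function.Injective f) (hρ : ∀ W, ρ' (W.map f) = ρ W)
    {C : Submodule F E} (hC : IsCircuit ρ C) : IsCircuit ρ' (C.map f) := by
  refine ⟨(indep_map_iff hf hρ).not.mpr hC.1, fun D hD => ?_⟩
  obtain ⟨D, rfl⟩ : ∃ D' : Submodule F E, D'.map f = D :=
    ⟨_, map_comap_eq_of_le (hD.le.trans LinearMap.map_le_range)⟩
  exact (indep_map_iff hf hρ).mpr (hC.2 _ ((map_lt_map_iff_of_injective hf).mp hD))

lemma IsOpenSp.map (hf : Function.Injective f) (hρ : ∀ W, ρ' (W.map f) = ρ W)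
    {V : Submodule F E} (hV : IsOpenSp ρ V) : IsOpenSp ρ' (V.map f) :=
  hV.map_of_forall_isCircuit f fun _ hC => (hC.map hf hρ).isOpenSp

end Injective

variable [FiniteDimensional F E]

lemma IsRkFn.rk_add_finrank_le (h : IsRkFn F ρ) {W V : Submodule F E} (hWV : W ≤ V) :
    ρ V + finrank F W ≤ ρ W + finrank F V := by
  obtain ⟨K, hK⟩ := W.exists_isCompl
  have hsup : W ⊔ K ⊓ V = V := by
    rw [← sup_inf_assoc_of_le K hWV, hK.sup_eq_top, top_inf_eq]
  have hinf : W ⊓ (K ⊓ V) = ⊥ := by rw [← inf_assoc, hK.inf_eq_bot, bot_inf_eq]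
  have hdim := finrank_sup_add_finrank_inf_eq W (K ⊓ V)
  have hsub := h.2.2 W (K ⊓ V)
  have hK' := h.1 (K ⊓ V)
  rw [hsup, hinf, finrank_bot] at hdim
  rw [hsup, hinf, h.rk_bot] at hsub
  omega

lemma Indep.mono (h : IsRkFn F ρ) {I C : Submodule F E} (hI : Indep ρ I) (hCI : C ≤ I) :
    Indep ρ C := by
  have hle := h.rk_add_finrank_le hCI
  have hC := h.1 C
  unfold Indep at *
  omega

lemma exists_isCircuit_le {D : Submodule F E} (hD : ¬ Indep ρ D) :
    ∃ C ≤ D, IsCircuit ρ C := by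
  obtain ⟨C, hCD, hmin⟩ := exists_minimal_le_of_wellFoundedLT (fun C => ¬ Indep ρ C) D hD
  exact ⟨C, hCD, hmin.prop, fun D' hD' =>
    by_contra fun hdep => hD'.not_ge (hmin.le_of_le hdep hD'.le)⟩

lemma IsCircuit.rk_add_one (r1 : ∀ V : Submodule F E, ρ V ≤ finrank F V) (mono : Monotone ρ)
    {C : Submodule F E} (hC : IsCircuit ρ C) : ρ C + 1 = finrank F C := by
  have hC0 : ⊥ < C := bot_lt_iff_ne_bot.mpr fun hC0 =>
    hC.1 (hC0 ▸ by simpa [Indep] using r1 ⊥)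
  obtain ⟨W, -, hWC⟩ := exists_le_covBy_of_lt hC0
  have hW : ρ W = finrank F W := hC.2 W hWC.lt
  have hdim := finrank_add_one_of_covBy hWC
  have hle := mono hWC.le
  have hlt : ρ C ≠ finrank F C := hC.1
  have := r1 C
  omega

lemma IsRkFn.rk_sup_eq (h : IsRkFn F ρ) {I W : Submodule F E}
    (hW : ∀ x ∈ W, ρ (I ⊔ span F {x}) = ρ I) : ρ (I ⊔ W) = ρ I := by
  obtain ⟨J, hmax⟩ :=
    exists_maximal_of_wellFoundedGT (fun J => I ≤ J ∧ ρ J = ρ I) ⟨I, le_rfl, rfl⟩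
  obtain ⟨hIJ, hJ⟩ := hmax.prop
  have hWJ : W ≤ J := by
    intro x hx
    by_contra hxJ
    have hsub := h.2.2 J (I ⊔ span F {x})
    rw [← sup_assoc, sup_eq_left.mpr hIJ, hW x hx] at hsub
    have hI : ρ I ≤ ρ (J ⊓ (I ⊔ span F {x})) := h.2.1 (le_inf hIJ le_sup_left)
    have hJx : ρ (J ⊔ span F {x}) = ρ I := le_antisymm (by omega) (hJ ▸ h.2.1 le_sup_left)
    exact hxJ (hmax.le_of_ge ⟨hIJ.trans le_sup_left, hJx⟩ le_sup_left
      (mem_sup_right (mem_span_singleton_self x)))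
  exact le_antisymm (hJ ▸ h.2.1 (sup_le hIJ hWJ)) (h.2.1 le_sup_left)

lemma IsRkFn.exists_indep_le_rk_eq (h : IsRkFn F ρ) (W : Submodule F E) :
    ∃ I ≤ W, Indep ρ I ∧ ρ I = ρ W := by
  obtain ⟨I, hmax⟩ := exists_maximal_of_wellFoundedGT
    (fun I => I ≤ W ∧ Indep ρ I) ⟨⊥, bot_le, by simp [Indep, h.rk_bot]⟩
  obtain ⟨hIW, hI⟩ := hmax.prop
  refine ⟨I, hIW, hI, ?_⟩
  have hspan : ∀ x ∈ W, ρ (I ⊔ span F {x}) = ρ I := by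
    intro x hxW
    by_cases hxI : x ∈ I
    · rw [sup_eq_left.mpr ((span_singleton_le_iff_mem x I).mpr hxI)]
    · have hle : I ⊔ span F {x} ≤ W := sup_le hIW ((span_singleton_le_iff_mem x W).mpr hxW)
      have hdep : ¬ Indep ρ (I ⊔ span F {x}) := fun hind =>
        hxI (hmax.le_of_ge ⟨hle, hind⟩ le_sup_left (mem_sup_right (mem_span_singleton_self x)))
      have hdim := finrank_sup_span_singleton hxI
      have hr1 := h.1 (I ⊔ span F {x})
      have hmono := h.2.1 (le_sup_left : I ≤ I ⊔ span F {x})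
      unfold Indep at hI hdep
      omega
  rw [← h.rk_sup_eq hspan, sup_eq_right.mpr hIW]

/- If the circuits of `V` only spanned `cyc ρ V < V`, pick a hyperplane `W ≥ cyc ρ V`, a basis
`I` of `W` and `x ∈ V \ W`: then `I + ⟨x⟩` is dependent, and a circuit inside it lies in `W`, hence
in `I`. -/
lemma isOpenSp_of_forall_covBy (h : IsRkFn F ρ) {V : Submodule F E}
    (hV : ∀ W, W ⋖ V → ρ W = ρ V) : IsOpenSp ρ V := by
  refine ⟨{C | IsCircuit ρ C ∧ C ≤ V}, fun C hC => hC.1, ?_⟩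
  change V = cyc ρ V
  refine (eq_of_le_of_not_lt (sSup_le fun C hC => hC.2) fun hlt => ?_).symm
  obtain ⟨W, hcW, hWV⟩ := exists_le_covBy_of_lt hlt
  obtain ⟨I, hIW, hI, hρI⟩ := h.exists_indep_le_rk_eq W
  obtain ⟨x, hxV, hxW⟩ := SetLike.exists_of_lt hWV.lt
  have hxI : x ∉ I := fun hx => hxW (hIW hx)
  set D := I ⊔ span F {x} with hD
  have hxD : x ∈ D := mem_sup_right (mem_span_singleton_self x)
  have hDV : D ≤ V := sup_le (hIW.trans hWV.le) ((span_singleton_le_iff_mem x V).mpr hxV)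
  have hWD : W ⊓ D = I := by
    have hsup : W ⊔ D = V := (hWV.eq_or_eq le_sup_left (sup_le hWV.le hDV)).resolve_left
      fun hW => hxW (hW ▸ mem_sup_right hxD)
    have hID : I ⋖ D := by
      simpa only [hD, sup_comm] using covBy_span_singleton_sup hxI
    exact ((hID.eq_or_eq (le_inf hIW le_sup_left) inf_le_right).resolve_right
      (inf_covBy_of_covBy_sup_left (hsup ▸ hWV)).ne)
  have hdep : ¬ Indep ρ D := by
    have hdim : finrank F D = finrank F I + 1 := finrank_sup_span_singleton hxI
    have hle := h.2.1 hDV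
    rw [← hV W hWV] at hle
    unfold Indep at hI ⊢
    omega
  obtain ⟨C, hCD, hC⟩ := exists_isCircuit_le hdep
  have hCW : C ≤ W := (le_sSup ⟨hC, hCD.trans hDV⟩ : C ≤ cyc ρ V).trans hcW
  exact hC.1 (hI.mono h (hWD ▸ le_inf hCW hCD))

end RankFunction

section DirectSum

variable {F E₁ E₂ : Type*} [Field F] [AddCommGroup E₁] [Module F E₁] [AddCommGroup E₂]
  [Module F E₂] {ρ₁ : Submodule F E₁ → ℕ} {ρ₂ : Submodule F E₂ → ℕ}

def dsPhi (ρ₁ : Submodule F E₁ → ℕ) (ρ₂ : Submodule F E₂ → ℕ) (V : Submodule F (E₁ × E₂)) : ℕ :=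
  ρ₁ (V.map (LinearMap.fst F E₁ E₂)) + ρ₂ (V.map (LinearMap.snd F E₁ E₂))

lemma dsPhi_sup_add_dsPhi_inf_le (h₁ : IsRkFn F ρ₁) (h₂ : IsRkFn F ρ₂)
    (V W : Submodule F (E₁ × E₂)) :
    dsPhi ρ₁ ρ₂ (V ⊔ W) + dsPhi ρ₁ ρ₂ (V ⊓ W) ≤ dsPhi ρ₁ ρ₂ V + dsPhi ρ₁ ρ₂ W := by
  have m₁ := h₁.2.1 (map_inf_le (LinearMap.fst F E₁ E₂) (p := V) (q := W))
  have m₂ := h₂.2.1 (map_inf_le (LinearMap.snd F E₁ E₂) (p := V) (q := W))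
  have s₁ := h₁.2.2 (V.map (LinearMap.fst F E₁ E₂)) (W.map (LinearMap.fst F E₁ E₂))
  have s₂ := h₂.2.2 (V.map (LinearMap.snd F E₁ E₂)) (W.map (LinearMap.snd F E₁ E₂))
  unfold dsPhi
  rw [Submodule.map_sup, Submodule.map_sup]
  omega

lemma dsPhi_inf_prod_lt (h₁ : IsRkFn F ρ₁) (h₂ : IsRkFn F ρ₂) {V₁ : Submodule F E₁}
    {V₂ : Submodule F E₂} (hV₁ : IsFlat ρ₁ V₁) (hV₂ : IsFlat ρ₂ V₂)
    {X : Submodule F (E₁ × E₂)} (hX : ¬ X ≤ V₁.prod V₂) :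
    dsPhi ρ₁ ρ₂ (X ⊓ V₁.prod V₂) < dsPhi ρ₁ ρ₂ X := by
  obtain ⟨hV₁', hV₂'⟩ := (le_prod_iff F E₁ E₂).mp (inf_le_right : X ⊓ V₁.prod V₂ ≤ _)
  have m₁ := h₁.2.1 (le_inf (map_mono inf_le_left) hV₁')
  have m₂ := h₂.2.1 (le_inf (map_mono inf_le_left) hV₂')
  have l₁ := h₁.2.1 (inf_le_left : X.map (LinearMap.fst F E₁ E₂) ⊓ V₁ ≤ _)
  have l₂ := h₂.2.1 (inf_le_left : X.map (LinearMap.snd F E₁ E₂) ⊓ V₂ ≤ _)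
  rw [le_prod_iff, not_and_or] at hX
  unfold dsPhi
  rcases hX with hX | hX
  · have := hV₁.rk_inf_lt h₁ hX
    omega
  · have := hV₂.rk_inf_lt h₂ hX
    omega

lemma span_singleton_inl (x : E₁) :
    span F {((x, 0) : E₁ × E₂)} = (span F {x}).prod (⊥ : Submodule F E₂) := by
  rw [← map_inl, map_span, Set.image_singleton]
  rfl

lemma span_singleton_inr (x : E₂) :
    span F {((0, x) : E₁ × E₂)} = (⊥ : Submodule F E₁).prod (span F {x}) := by
  rw [← map_inr, map_span, Set.image_singleton]
  rfl

/-- `V` is tight when `X = V` attains the minimum defining `dsRank ρ₁ ρ₂ V`. -/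
def IsTight (ρ₁ : Submodule F E₁ → ℕ) (ρ₂ : Submodule F E₂ → ℕ)
    (V : Submodule F (E₁ × E₂)) : Prop :=
  ∀ X ≤ V, dsPhi ρ₁ ρ₂ V + finrank F X ≤ dsPhi ρ₁ ρ₂ X + finrank F V

lemma isTight_bot : IsTight ρ₁ ρ₂ ⊥ := by
  intro X hX
  rw [le_bot_iff.mp hX]

variable [FiniteDimensional F E₁] [FiniteDimensional F E₂]

lemma finrank_prod_eq (V₁ : Submodule F E₁) (V₂ : Submodule F E₂) :
    finrank F (V₁.prod V₂) = finrank F V₁ + finrank F V₂ := by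
  have hker : V₁.prod V₂ ⊓ LinearMap.ker (LinearMap.fst F E₁ E₂) =
      V₂.map (LinearMap.inr F E₁ E₂) := by
    ext ⟨a, b⟩
    simp only [mem_inf, mem_prod, LinearMap.mem_ker, LinearMap.fst_apply, mem_map,
      LinearMap.inr_apply, Prod.mk.injEq]
    aesop
  have h := finrank_map_add_finrank_inf_ker (LinearMap.fst F E₁ E₂) (V₁.prod V₂)
  rw [prod_map_fst, hker, ← (equivMapOfInjective _ LinearMap.inr_injective V₂).finrank_eq] at h
  exact h.symm

lemma dsRank_add_finrank_le {V X : Submodule F (E₁ × E₂)} (hXV : X ≤ V) :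
    dsRank ρ₁ ρ₂ V + finrank F X ≤ dsPhi ρ₁ ρ₂ X + finrank F V := by
  have hle : dsRank ρ₁ ρ₂ V ≤ dsPhi ρ₁ ρ₂ X + (finrank F V - finrank F X) :=
    Nat.sInf_le ⟨X, hXV, rfl⟩
  have := finrank_mono hXV
  omega

lemma exists_dsRank_add_finrank_eq (V : Submodule F (E₁ × E₂)) :
    ∃ X ≤ V, dsRank ρ₁ ρ₂ V + finrank F X = dsPhi ρ₁ ρ₂ X + finrank F V := by
  have hne : {n | ∃ X ≤ V, n = dsPhi ρ₁ ρ₂ X + (finrank F V - finrank F X)}.Nonempty :=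
    ⟨_, ⊥, bot_le, rfl⟩
  obtain ⟨X, hXV, hX⟩ : ∃ X ≤ V,
      dsRank ρ₁ ρ₂ V = dsPhi ρ₁ ρ₂ X + (finrank F V - finrank F X) :=
    Nat.sInf_mem hne
  have := finrank_mono hXV
  exact ⟨X, hXV, by omega⟩

lemma dsRank_prod (h₁ : IsRkFn F ρ₁) (h₂ : IsRkFn F ρ₂) (V₁ : Submodule F E₁)
    (V₂ : Submodule F E₂) : dsRank ρ₁ ρ₂ (V₁.prod V₂) = ρ₁ V₁ + ρ₂ V₂ := by
  refine le_antisymm ?_ ?_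
  · have := dsRank_add_finrank_le (ρ₁ := ρ₁) (ρ₂ := ρ₂) (le_refl (V₁.prod V₂))
    rw [dsPhi, prod_map_fst, prod_map_snd] at this
    omega
  · obtain ⟨X, hXV, hX⟩ := exists_dsRank_add_finrank_eq (ρ₁ := ρ₁) (ρ₂ := ρ₂) (V₁.prod V₂)
    obtain ⟨hX₁, hX₂⟩ := (le_prod_iff F E₁ E₂).mp hXV
    have c₁ := h₁.rk_add_finrank_le hX₁
    have c₂ := h₂.rk_add_finrank_le hX₂
    have hdim := finrank_mono ((le_prod_iff F E₁ E₂).mpr ⟨le_rfl, le_rfl⟩ :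
      X ≤ (X.map (LinearMap.fst F E₁ E₂)).prod (X.map (LinearMap.snd F E₁ E₂)))
    rw [finrank_prod_eq] at hdim hX
    unfold dsPhi at hX
    omega

lemma dsRank_map_inl (h₁ : IsRkFn F ρ₁) (h₂ : IsRkFn F ρ₂) (W : Submodule F E₁) :
    dsRank ρ₁ ρ₂ (W.map (LinearMap.inl F E₁ E₂)) = ρ₁ W := by
  rw [map_inl, dsRank_prod h₁ h₂, h₂.rk_bot, add_zero]

lemma dsRank_map_inr (h₁ : IsRkFn F ρ₁) (h₂ : IsRkFn F ρ₂) (W : Submodule F E₂) :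
    dsRank ρ₁ ρ₂ (W.map (LinearMap.inr F E₁ E₂)) = ρ₂ W := by
  rw [map_inr, dsRank_prod h₁ h₂, h₁.rk_bot, zero_add]

lemma dsRank_monotone (h₁ : IsRkFn F ρ₁) (h₂ : IsRkFn F ρ₂) : Monotone (dsRank ρ₁ ρ₂) := by
  intro V W hVW
  obtain ⟨X, hXW, hX⟩ := exists_dsRank_add_finrank_eq (ρ₁ := ρ₁) (ρ₂ := ρ₂) W
  have hV := dsRank_add_finrank_le (ρ₁ := ρ₁) (ρ₂ := ρ₂) (inf_le_right : X ⊓ V ≤ V)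
  have hφ : dsPhi ρ₁ ρ₂ (X ⊓ V) ≤ dsPhi ρ₁ ρ₂ X :=
    add_le_add (h₁.2.1 (map_mono inf_le_left)) (h₂.2.1 (map_mono inf_le_left))
  have hdim := finrank_sup_add_finrank_inf_eq X V
  have hsup := finrank_mono (sup_le hXW hVW)
  omega

lemma dsRank_le_finrank (h₁ : IsRkFn F ρ₁) (h₂ : IsRkFn F ρ₂) (V : Submodule F (E₁ × E₂)) :
    dsRank ρ₁ ρ₂ V ≤ finrank F V := by
  have := dsRank_add_finrank_le (ρ₁ := ρ₁) (ρ₂ := ρ₂) (bot_le : ⊥ ≤ V)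
  rwa [dsPhi, Submodule.map_bot, Submodule.map_bot, h₁.rk_bot, h₂.rk_bot, finrank_bot,
    add_zero, zero_add, zero_add] at this

lemma Indep.finrank_le_dsPhi {X : Submodule F (E₁ × E₂)} (hX : Indep (dsRank ρ₁ ρ₂) X) :
    finrank F X ≤ dsPhi ρ₁ ρ₂ X := by
  have := dsRank_add_finrank_le (ρ₁ := ρ₁) (ρ₂ := ρ₂) (le_refl X)
  unfold Indep at hX
  omega

lemma IsCircuit.dsPhi_add_one (h₁ : IsRkFn F ρ₁) (h₂ : IsRkFn F ρ₂)
    {C : Submodule F (E₁ × E₂)} (hC : IsCircuit (dsRank ρ₁ ρ₂) C) :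
    dsPhi ρ₁ ρ₂ C + 1 = finrank F C := by
  have hrk := hC.rk_add_one (dsRank_le_finrank h₁ h₂) (dsRank_monotone h₁ h₂)
  obtain ⟨X, hXC, hX⟩ := exists_dsRank_add_finrank_eq (ρ₁ := ρ₁) (ρ₂ := ρ₂) C
  rcases hXC.eq_or_lt with rfl | hlt
  · omega
  · have := (hC.2 X hlt).finrank_le_dsPhi
    omega

lemma IsTight.dsRank_eq {V : Submodule F (E₁ × E₂)} (hV : IsTight ρ₁ ρ₂ V) :
    dsRank ρ₁ ρ₂ V = dsPhi ρ₁ ρ₂ V := by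
  have hle := dsRank_add_finrank_le (ρ₁ := ρ₁) (ρ₂ := ρ₂) (le_refl V)
  obtain ⟨X, hXV, hX⟩ := exists_dsRank_add_finrank_eq (ρ₁ := ρ₁) (ρ₂ := ρ₂) V
  have := hV X hXV
  omega

lemma IsTight.sup (h₁ : IsRkFn F ρ₁) (h₂ : IsRkFn F ρ₂) {V W : Submodule F (E₁ × E₂)}
    (hV : IsTight ρ₁ ρ₂ V) (hW : IsTight ρ₁ ρ₂ W) : IsTight ρ₁ ρ₂ (V ⊔ W) := by
  intro X hX
  have hXVW : X ⊔ V ⊔ W = V ⊔ W := by rw [sup_assoc, sup_eq_right.mpr hX]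
  have s₁ := dsPhi_sup_add_dsPhi_inf_le h₁ h₂ (X ⊔ V) W
  have d₁ := finrank_sup_add_finrank_inf_eq (X ⊔ V) W
  rw [hXVW] at s₁ d₁
  have t₁ := hW ((X ⊔ V) ⊓ W) inf_le_right
  have s₂ := dsPhi_sup_add_dsPhi_inf_le h₁ h₂ X V
  have d₂ := finrank_sup_add_finrank_inf_eq X V
  have t₂ := hV (X ⊓ V) inf_le_right
  omega

lemma IsCircuit.isTight (h₁ : IsRkFn F ρ₁) (h₂ : IsRkFn F ρ₂) {C : Submodule F (E₁ × E₂)}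
    (hC : IsCircuit (dsRank ρ₁ ρ₂) C) : IsTight ρ₁ ρ₂ C := by
  intro X hXC
  have hφ := hC.dsPhi_add_one h₁ h₂
  rcases hXC.eq_or_lt with rfl | hlt
  · rfl
  · have := (hC.2 X hlt).finrank_le_dsPhi
    omega

lemma IsOpenSp.isTight (h₁ : IsRkFn F ρ₁) (h₂ : IsRkFn F ρ₂) {Z : Submodule F (E₁ × E₂)}
    (hZ : IsOpenSp (dsRank ρ₁ ρ₂) Z) : IsTight ρ₁ ρ₂ Z := by
  obtain ⟨S, hS, rfl⟩ := hZ
  obtain ⟨t, htS, hSt⟩ := CompleteLattice.WellFoundedGT.isSupFiniteCompact _ S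
  rw [hSt]
  exact Finset.sup_induction isTight_bot (fun _ hV _ hW => hV.sup h₁ h₂ hW)
    fun C hC => (hS C (htS hC)).isTight h₁ h₂

lemma IsCircuit.dsPhi_le_inf_comap (h₁ : IsRkFn F ρ₁) (h₂ : IsRkFn F ρ₂)
    {E' : Type*} [AddCommGroup E'] [Module F E'] [FiniteDimensional F E']
    {C : Submodule F (E₁ × E₂)} (hC : IsCircuit (dsRank ρ₁ ρ₂) C) (f : E₁ × E₂ →ₗ[F] E')
    {A : Submodule F E'} (hA : A ⋖ C.map f) :
    dsPhi ρ₁ ρ₂ C ≤ dsPhi ρ₁ ρ₂ (C ⊓ A.comap f) := by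
  have hdim := finrank_inf_comap_add_finrank_map f hA.le
  have hA' := finrank_add_one_of_covBy hA
  have hlt : C ⊓ A.comap f < C :=
    inf_le_left.lt_of_ne fun h => by rw [h] at hdim; omega
  have hφ := hC.dsPhi_add_one h₁ h₂
  have := (hC.2 _ hlt).finrank_le_dsPhi
  omega

lemma IsCircuit.isOpenSp_map_fst (h₁ : IsRkFn F ρ₁) (h₂ : IsRkFn F ρ₂)
    {C : Submodule F (E₁ × E₂)} (hC : IsCircuit (dsRank ρ₁ ρ₂) C) :
    IsOpenSp ρ₁ (C.map (LinearMap.fst F E₁ E₂)) := by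
  refine isOpenSp_of_forall_covBy h₁ fun A hA => ?_
  have hφ := hC.dsPhi_le_inf_comap h₁ h₂ _ hA
  have m₁ := h₁.2.1 ((map_mono inf_le_right).trans (map_comap_le _ A) :
    (C ⊓ A.comap (LinearMap.fst F E₁ E₂)).map (LinearMap.fst F E₁ E₂) ≤ A)
  have m₂ := h₂.2.1 (map_mono inf_le_left :
    (C ⊓ A.comap (LinearMap.fst F E₁ E₂)).map (LinearMap.snd F E₁ E₂) ≤ C.map _)
  have m₃ := h₁.2.1 hA.le
  unfold dsPhi at hφ
  omega

lemma IsCircuit.isOpenSp_map_snd (h₁ : IsRkFn F ρ₁) (h₂ : IsRkFn F ρ₂)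
    {C : Submodule F (E₁ × E₂)} (hC : IsCircuit (dsRank ρ₁ ρ₂) C) :
    IsOpenSp ρ₂ (C.map (LinearMap.snd F E₁ E₂)) := by
  refine isOpenSp_of_forall_covBy h₂ fun B hB => ?_
  have hφ := hC.dsPhi_le_inf_comap h₁ h₂ _ hB
  have m₁ := h₁.2.1 (map_mono inf_le_left :
    (C ⊓ B.comap (LinearMap.snd F E₁ E₂)).map (LinearMap.fst F E₁ E₂) ≤ C.map _)
  have m₂ := h₂.2.1 ((map_mono inf_le_right).trans (map_comap_le _ B) :
    (C ⊓ B.comap (LinearMap.snd F E₁ E₂)).map (LinearMap.snd F E₁ E₂) ≤ B)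
  have m₃ := h₂.2.1 hB.le
  unfold dsPhi at hφ
  omega

lemma isOpenSp_prod (h₁ : IsRkFn F ρ₁) (h₂ : IsRkFn F ρ₂) {Z₁ : Submodule F E₁}
    {Z₂ : Submodule F E₂} (hZ₁ : IsOpenSp ρ₁ Z₁) (hZ₂ : IsOpenSp ρ₂ Z₂) :
    IsOpenSp (dsRank ρ₁ ρ₂) (Z₁.prod Z₂) := by
  have hZ : Z₁.prod Z₂ = sSup {Z₁.map (LinearMap.inl F E₁ E₂), Z₂.map (LinearMap.inr F E₁ E₂)} := by
    rw [sSup_pair, map_inl, map_inr, prod_sup_prod, sup_bot_eq, bot_sup_eq]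
  rw [hZ]
  refine isOpenSp_sSup ?_
  rintro _ (rfl | rfl)
  · exact hZ₁.map LinearMap.inl_injective (dsRank_map_inl h₁ h₂)
  · exact hZ₂.map LinearMap.inr_injective (dsRank_map_inr h₁ h₂)

lemma IsFlat.prod (h₁ : IsRkFn F ρ₁) (h₂ : IsRkFn F ρ₂) {V₁ : Submodule F E₁}
    {V₂ : Submodule F E₂} (hV₁ : IsFlat ρ₁ V₁) (hV₂ : IsFlat ρ₂ V₂) :
    IsFlat (dsRank ρ₁ ρ₂) (V₁.prod V₂) := by
  intro x hx
  set V := V₁.prod V₂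
  have hVx : finrank F ↥(V ⊔ span F {x}) = finrank F V + 1 := finrank_sup_span_singleton hx
  obtain ⟨X, hXV', hX⟩ := exists_dsRank_add_finrank_eq (ρ₁ := ρ₁) (ρ₂ := ρ₂) (V ⊔ span F {x})
  by_cases hXV : X ≤ V
  · have := dsRank_add_finrank_le (ρ₁ := ρ₁) (ρ₂ := ρ₂) hXV
    omega
  · have hsup : X ⊔ V = V ⊔ span F {x} := by
      exact ((sup_comm (span F {x}) V ▸ covBy_span_singleton_sup hx).eq_or_eq le_sup_right
        (sup_le hXV' le_sup_left)).resolve_left fun h => hXV (h ▸ le_sup_left)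
    have hdim := finrank_sup_add_finrank_inf_eq X V
    have hφ : dsPhi ρ₁ ρ₂ (X ⊓ V) < dsPhi ρ₁ ρ₂ X := dsPhi_inf_prod_lt h₁ h₂ hV₁ hV₂ hXV
    have := dsRank_add_finrank_le (ρ₁ := ρ₁) (ρ₂ := ρ₂) (inf_le_right : X ⊓ V ≤ V)
    rw [hsup] at hdim
    omega

lemma isFlat_prod_iff (h₁ : IsRkFn F ρ₁) (h₂ : IsRkFn F ρ₂) {V₁ : Submodule F E₁}
    {V₂ : Submodule F E₂} :
    IsFlat (dsRank ρ₁ ρ₂) (V₁.prod V₂) ↔ IsFlat ρ₁ V₁ ∧ IsFlat ρ₂ V₂ := by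
  refine ⟨fun hV => ⟨fun x hx => ?_, fun x hx => ?_⟩, fun hV => hV.1.prod h₁ h₂ hV.2⟩
  · have := hV (x, 0) fun hmem => hx hmem.1
    rwa [span_singleton_inl, prod_sup_prod, sup_bot_eq, dsRank_prod h₁ h₂, dsRank_prod h₁ h₂,
      add_lt_add_iff_right] at this
  · have := hV (0, x) fun hmem => hx hmem.2
    rwa [span_singleton_inr, prod_sup_prod, sup_bot_eq, dsRank_prod h₁ h₂, dsRank_prod h₁ h₂,
      add_lt_add_iff_left] at this

end DirectSum

end QM

namespace QM

variable {F E₁ E₂ : Type*} [Field F] [Fintype F]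
  [AddCommGroup E₁] [Module F E₁] [FiniteDimensional F E₁]
  [AddCommGroup E₂] [Module F E₂] [FiniteDimensional F E₂]

theorem stmt17 (ρ₁ : Submodule F E₁ → ℕ) (ρ₂ : Submodule F E₂ → ℕ)
    (h₁ : IsRkFn F ρ₁) (h₂ : IsRkFn F ρ₂) :
    ∀ Z : Submodule F (E₁ × E₂),
      CyclicFlat (dsRank ρ₁ ρ₂) Z ↔
        ∃ (Z₁ : Submodule F E₁) (Z₂ : Submodule F E₂),
          CyclicFlat ρ₁ Z₁ ∧ CyclicFlat ρ₂ Z₂ ∧ Z = Z₁.prod Z₂ := by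
  intro Z
  constructor
  · rintro ⟨hflat, hopen⟩
    set Z₁ := Z.map (LinearMap.fst F E₁ E₂)
    set Z₂ := Z.map (LinearMap.snd F E₁ E₂)
    have hZ : Z = Z₁.prod Z₂ :=
      hflat.eq_of_le_of_rk_le (dsRank_monotone h₁ h₂) ((le_prod_iff F E₁ E₂).mpr ⟨le_rfl, le_rfl⟩)
        (by rw [dsRank_prod h₁ h₂, (hopen.isTight h₁ h₂).dsRank_eq, dsPhi])
    rw [hZ, isFlat_prod_iff h₁ h₂] at hflat
    exact ⟨Z₁, Z₂,
      ⟨hflat.1, hopen.map_of_forall_isCircuit _ fun C hC => hC.isOpenSp_map_fst h₁ h₂⟩,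
      ⟨hflat.2, hopen.map_of_forall_isCircuit _ fun C hC => hC.isOpenSp_map_snd h₁ h₂⟩, hZ⟩
  · rintro ⟨Z₁, Z₂, hZ₁, hZ₂, rfl⟩
    exact ⟨(isFlat_prod_iff h₁ h₂).mpr ⟨hZ₁.1, hZ₂.1⟩, isOpenSp_prod h₁ h₂ hZ₁.2 hZ₂.2⟩

end QM
end

section
/- Let M=(E,ρ) be a q-matroid, Ẑ a cyclic flat of M, and M|_Ẑ the restriction of M to Ẑ. Then the cyclic flats of M|_Ẑ are exactly the cyclic flats of M that are contained in Ẑ. -/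
open Submodule Module

/-!
Subspaces of `Ẑ` are exactly the images of subspaces of `↥Ẑ`, and taking images preserves
dimension, so independence, circuits and openness mean the same in `M` and in `M|_Ẑ`. Flatness
transfers for vectors inside `Ẑ`; a vector `x ∉ Ẑ` raises the rank of every `V ≤ Ẑ`, since by
submodularity `ρ(V + ⟨x⟩) = ρ V` would force `ρ(Ẑ + ⟨x⟩) = ρ Ẑ`, contradicting flatness of `Ẑ`.
-/

namespace QM

section Restriction

variable {F E : Type*} [Field F] [AddCommGroup E] [Module F E]

/-- The rank function of the restriction `M|_Z`. -/
def restrict (ρ : Submodule F E → ℕ) (Z : Submodule F E) : Submodule F Z → ℕ :=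
  fun W => ρ (W.map Z.subtype)

variable {ρ : Submodule F E → ℕ} {Z : Submodule F E}

theorem range_map_subtype (Z : Submodule F E) :
    Set.range (fun W : Submodule F Z => W.map Z.subtype) = Set.Iic Z := by
  ext V
  refine ⟨by rintro ⟨W, rfl⟩; exact map_subtype_le Z W, fun hV => ⟨V.comap Z.subtype, ?_⟩⟩
  exact (map_comap_subtype Z V).trans (inf_eq_right.mpr hV)

theorem setOf_and_le_eq_image_map_subtype (P : Submodule F E → Prop) (Z : Submodule F E) :
    {V | P V ∧ V ≤ Z} =
      (fun W : Submodule F Z => W.map Z.subtype) '' {W | P (W.map Z.subtype)} := by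
  ext V
  constructor
  · rintro ⟨hP, hV⟩
    obtain ⟨W, rfl⟩ : V ∈ Set.range (fun W : Submodule F Z => W.map Z.subtype) := by
      rwa [range_map_subtype]
    exact ⟨W, hP, rfl⟩
  · rintro ⟨W, hW, rfl⟩
    exact ⟨hW, map_subtype_le Z W⟩

theorem map_sSup_eq_sSup_image {E' : Type*} [AddCommGroup E'] [Module F E'] (f : E →ₗ[F] E')
    (S : Set (Submodule F E)) : (sSup S).map f = sSup (map f '' S) := by
  rw [(gc_map_comap f).l_sSup, sSup_image]

theorem map_subtype_sup_span_singleton (W : Submodule F Z) (x : Z) :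
    (W ⊔ span F {x}).map Z.subtype = W.map Z.subtype ⊔ span F {(x : E)} := by
  rw [Submodule.map_sup, map_span, Set.image_singleton, subtype_apply]

theorem indep_restrict_iff {W : Submodule F Z} :
    Indep (restrict ρ Z) W ↔ Indep ρ (W.map Z.subtype) := by
  rw [Indep, Indep, restrict, finrank_map_subtype_eq]

theorem isCircuit_restrict_iff {W : Submodule F Z} :
    IsCircuit (restrict ρ Z) W ↔ IsCircuit ρ (W.map Z.subtype) := by
  simp only [IsCircuit, indep_restrict_iff]
  refine and_congr_right fun _ => ⟨fun h D hD => ?_, fun h D hD => h _ ?_⟩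
  · obtain ⟨D, rfl⟩ : D ∈ Set.range (fun W : Submodule F Z => W.map Z.subtype) := by
      rw [range_map_subtype]
      exact hD.le.trans (map_subtype_le Z W)
    exact h D ((map_lt_map_iff_of_injective Z.injective_subtype).mp hD)
  · exact map_strictMono_of_injective Z.injective_subtype hD

theorem isOpenSp_restrict_iff {W : Submodule F Z} :
    IsOpenSp (restrict ρ Z) W ↔ IsOpenSp ρ (W.map Z.subtype) := by
  constructor
  · rintro ⟨S, hS, rfl⟩
    refine ⟨map Z.subtype '' S, ?_, map_sSup_eq_sSup_image _ S⟩
    rintro _ ⟨C, hC, rfl⟩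
    exact isCircuit_restrict_iff.mp (hS C hC)
  · rintro ⟨S, hS, hW⟩
    have hSZ : S ⊆ Set.range (fun W : Submodule F Z => W.map Z.subtype) := by
      rw [range_map_subtype]
      exact fun C hC => (le_sSup hC).trans (hW ▸ map_subtype_le Z W)
    refine ⟨map Z.subtype ⁻¹' S, fun C hC => isCircuit_restrict_iff.mpr (hS _ hC),
      map_injective_of_injective Z.injective_subtype ?_⟩
    rw [hW, map_sSup_eq_sSup_image, Set.image_preimage_eq_of_subset hSZ]

theorem IsRkFn.rank_sup_eq_of_le (hρ : IsRkFn F ρ) {V U : Submodule F E} (hVZ : V ≤ Z)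
    (hVU : ρ (V ⊔ U) = ρ V) : ρ (Z ⊔ U) = ρ Z := by
  have hsub := hρ.2.2 Z (V ⊔ U)
  rw [← sup_assoc, sup_eq_left.mpr hVZ] at hsub
  have hV : ρ V ≤ ρ (Z ⊓ (V ⊔ U)) := hρ.2.1 (le_inf hVZ le_sup_left)
  have hZ : ρ Z ≤ ρ (Z ⊔ U) := hρ.2.1 le_sup_left
  omega

theorem IsFlat.rank_lt_rank_sup_span_of_le (hρ : IsRkFn F ρ) (hZ : IsFlat ρ Z)
    {V : Submodule F E} (hVZ : V ≤ Z) {x : E} (hx : x ∉ Z) : ρ V < ρ (V ⊔ span F {x}) :=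
  (hρ.2.1 le_sup_left).lt_of_ne fun h => (hZ x hx).ne (hρ.rank_sup_eq_of_le hVZ h.symm).symm

theorem isFlat_restrict_iff (hρ : IsRkFn F ρ) (hZ : IsFlat ρ Z) {W : Submodule F Z} :
    IsFlat (restrict ρ Z) W ↔ IsFlat ρ (W.map Z.subtype) := by
  simp only [IsFlat, restrict, map_subtype_sup_span_singleton]
  constructor
  · intro h x hx
    by_cases hxZ : x ∈ Z
    · exact h ⟨x, hxZ⟩ fun hW => hx ⟨_, hW, rfl⟩
    · exact hZ.rank_lt_rank_sup_span_of_le hρ (map_subtype_le Z W) hxZ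
  · exact fun h x hx => h x fun ⟨y, hy, hyx⟩ => hx (Subtype.ext hyx ▸ hy)

theorem cyclicFlat_restrict_iff (hρ : IsRkFn F ρ) (hZ : IsFlat ρ Z) {W : Submodule F Z} :
    CyclicFlat (restrict ρ Z) W ↔ CyclicFlat ρ (W.map Z.subtype) :=
  and_congr (isFlat_restrict_iff hρ hZ) isOpenSp_restrict_iff

end Restriction

set_option linter.unusedSectionVars false

variable {F E : Type*} [Field F] [Fintype F] [AddCommGroup E] [Module F E]
  [FiniteDimensional F E]

theorem stmt18 (ρ : Submodule F E → ℕ) (hρ : IsRkFn F ρ)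
    (Zhat : Submodule F E) (hZ : CyclicFlat ρ Zhat) :
    {Z : Submodule F E | CyclicFlat ρ Z ∧ Z ≤ Zhat} =
      (fun W : Submodule F ↥Zhat => W.map Zhat.subtype) ''
        {W : Submodule F ↥Zhat |
          CyclicFlat (fun W' : Submodule F ↥Zhat => ρ (W'.map Zhat.subtype)) W} := by
  have hcyclic : {W : Submodule F Zhat | CyclicFlat (restrict ρ Zhat) W} =
      {W | CyclicFlat ρ (W.map Zhat.subtype)} :=
    Set.ext fun _ => cyclicFlat_restrict_iff hρ hZ.1
  exact (setOf_and_le_eq_image_map_subtype _ Zhat).trans (congrArg _ hcyclic.symm)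

end QM
end
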